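/- With Γ and e defined by e_λ = sign((K*(y-u))_λ) for λ ∈ Γ and e_λ = 0 otherwise, every minimizer x̃ of ‖Kx-y‖² on B_R satisfies ⟨x̃, e⟩ = R, provided the minimizers are not global minimizers of ‖Kx-y‖². -/

import Mathlib

open scoped ENNReal NNReal

/-- The `ℓ¹`-ball of radius `R` inside `ℓ²(I)`. -/
noncomputable def l1Ball (I : Type*) (R : ℝ) : Set (lp (fun _ : I => ℝ) 2) :=
  {x | (∑' i, (‖x i‖₊ : ℝ≥0∞)) ≤ ENNReal.ofReal R}

/-! A minimiser `x̃` of `‖K x - y‖` over the convex set `B_R` satisfies the first-order condition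
that it maximises the linear functional `w ↦ ⟪g, w⟫` on `B_R`, where `g = K*(y - u)`. Testing
against the vertices `± R δ_λ` of the ball shows that this maximum is at least `R ‖g‖_∞`, while
Hölder's inequality gives `⟪g, x̃⟫ ≤ ‖x̃‖₁ ‖g‖_∞ ≤ R ‖g‖_∞`. Equality throughout forces
`‖x̃‖₁ = R` and `x̃_λ g_λ = |x̃_λ| ‖g‖_∞` for every `λ`; hence `x̃` is supported on `Γ` with
`x̃_λ e_λ = |x̃_λ|`, and `⟨x̃, e⟩ = ‖x̃‖₁ = R`. -/

open RealInnerProductSpace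

section L1Ball

variable {I : Type*} {R : ℝ}

theorem mem_l1Ball_iff {x : lp (fun _ : I => ℝ) 2} :
    x ∈ l1Ball I R ↔ ∑' i, ‖x i‖ₑ ≤ ENNReal.ofReal R :=
  Iff.rfl

theorem convex_l1Ball : Convex ℝ (l1Ball I R) := by
  intro x hx w hw a b ha hb hab
  rw [mem_l1Ball_iff] at hx hw ⊢
  have hterm : ∀ i, ‖(a • x + b • w) i‖ₑ ≤ ENNReal.ofReal a * ‖x i‖ₑ + ENNReal.ofReal b * ‖w i‖ₑ :=
    fun i => by
      rw [← Real.enorm_of_nonneg ha, ← Real.enorm_of_nonneg hb, ← enorm_smul, ← enorm_smul]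
      exact enorm_add_le _ _
  calc ∑' i, ‖(a • x + b • w) i‖ₑ
      ≤ ∑' i, (ENNReal.ofReal a * ‖x i‖ₑ + ENNReal.ofReal b * ‖w i‖ₑ) :=
        ENNReal.tsum_le_tsum hterm
    _ = ENNReal.ofReal a * ∑' i, ‖x i‖ₑ + ENNReal.ofReal b * ∑' i, ‖w i‖ₑ := by
        rw [ENNReal.tsum_add, ENNReal.tsum_mul_left, ENNReal.tsum_mul_left]
    _ ≤ ENNReal.ofReal a * ENNReal.ofReal R + ENNReal.ofReal b * ENNReal.ofReal R := by
        gcongr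
    _ = ENNReal.ofReal R := by
        rw [← add_mul, ← ENNReal.ofReal_add ha hb, hab, ENNReal.ofReal_one, one_mul]

theorem summable_abs_of_mem_l1Ball {x : lp (fun _ : I => ℝ) 2} (hx : x ∈ l1Ball I R) :
    Summable fun i => |x i| := by
  have : Summable fun i => ‖x i‖₊ :=
    ENNReal.tsum_coe_ne_top_iff_summable.mp (ne_top_of_le_ne_top ENNReal.ofReal_ne_top hx)
  simpa [← NNReal.summable_coe] using this

theorem tsum_abs_le_of_mem_l1Ball (hR : 0 ≤ R) {x : lp (fun _ : I => ℝ) 2}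
    (hx : x ∈ l1Ball I R) : ∑' i, |x i| ≤ R := by
  rw [← ENNReal.ofReal_le_ofReal_iff hR, ENNReal.ofReal_tsum_of_nonneg (fun _ => abs_nonneg _)
    (summable_abs_of_mem_l1Ball hx)]
  simpa [Real.enorm_eq_ofReal_abs] using mem_l1Ball_iff.mp hx

theorem zero_mem_l1Ball : (0 : lp (fun _ : I => ℝ) 2) ∈ l1Ball I R := by
  simp [mem_l1Ball_iff]

theorem single_mem_l1Ball [DecidableEq I] (i : I) {c : ℝ} (hc : |c| ≤ R) :
    lp.single 2 i c ∈ l1Ball I R := by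
  have hsum : ∑' j, ‖lp.single (E := fun _ : I => ℝ) 2 i c j‖ₑ = ‖c‖ₑ := by
    refine (tsum_eq_single i fun j hj => ?_).trans ?_
    · rw [lp.single_apply_ne _ _ _ hj, enorm_zero]
    · rw [lp.single_apply_self]
  rw [mem_l1Ball_iff, hsum, Real.enorm_eq_ofReal_abs]
  exact ENNReal.ofReal_le_ofReal hc

end L1Ball

namespace Real

theorem mul_sign_self (r : ℝ) : r * Real.sign r = |r| := by
  rcases lt_trichotomy r 0 with hr | rfl | hr
  · rw [sign_of_neg hr, abs_of_neg hr, mul_neg_one]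
  · rw [sign_zero, mul_zero, abs_zero]
  · rw [sign_of_pos hr, abs_of_pos hr, mul_one]

theorem sign_mul_abs (r : ℝ) : Real.sign r * |r| = r := by
  rcases lt_trichotomy r 0 with hr | rfl | hr
  · rw [sign_of_neg hr, abs_of_neg hr, neg_one_mul, neg_neg]
  · rw [sign_zero, zero_mul]
  · rw [sign_of_pos hr, abs_of_pos hr, one_mul]

theorem abs_sign_le_one (r : ℝ) : |Real.sign r| ≤ 1 := by
  rcases sign_apply_eq r with h | h | h <;> rw [h] <;> norm_num

theorem mul_ite_sign_eq_abs {a b M : ℝ} (hM : 0 < M) (hb : |b| ≤ M) (h : a * b = |a| * M) :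
    a * (if |b| = M then Real.sign b else 0) = |a| := by
  rcases eq_or_ne a 0 with rfl | ha
  · simp
  have hbM : |b| = M := by
    refine hb.antisymm (le_of_mul_le_mul_left ?_ (abs_pos.mpr ha))
    rw [← h, ← abs_mul]
    exact le_abs_self _
  rw [if_pos hbM]
  refine mul_right_cancel₀ (hbM ▸ hM).ne' ?_
  rw [mul_assoc, sign_mul_abs, h, hbM]

end Real

section HolderL1Linfty

variable {I : Type*} {f g : I → ℝ} {M : ℝ}

theorem mul_le_abs_mul_of_abs_le (hg : ∀ i, |g i| ≤ M) (i : I) : f i * g i ≤ |f i| * M :=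
  (le_abs_self _).trans <| (abs_mul _ _).trans_le <| mul_le_mul_of_nonneg_left (hg i) (abs_nonneg _)

theorem summable_mul_of_abs_le (hf : Summable fun i => |f i|) (hg : ∀ i, |g i| ≤ M) :
    Summable fun i => f i * g i :=
  (hf.mul_right M).of_norm_bounded fun i => by
    rw [Real.norm_eq_abs, abs_mul]
    exact mul_le_mul_of_nonneg_left (hg i) (abs_nonneg _)

theorem tsum_mul_le_tsum_abs_mul (hf : Summable fun i => |f i|) (hg : ∀ i, |g i| ≤ M) :
    ∑' i, f i * g i ≤ (∑' i, |f i|) * M := by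
  rw [← tsum_mul_right]
  exact (summable_mul_of_abs_le hf hg).tsum_le_tsum (mul_le_abs_mul_of_abs_le hg) (hf.mul_right M)

theorem mul_eq_abs_mul_of_tsum_abs_mul_le (hf : Summable fun i => |f i|) (hg : ∀ i, |g i| ≤ M)
    (h : (∑' i, |f i|) * M ≤ ∑' i, f i * g i) (i : I) : f i * g i = |f i| * M := by
  have hgap : HasSum (fun i => |f i| * M - f i * g i) 0 := by
    have hsum := (hf.mul_right M).hasSum.sub (summable_mul_of_abs_le hf hg).hasSum
    rwa [tsum_mul_right, le_antisymm (sub_nonpos.mpr h)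
      (sub_nonneg.mpr (tsum_mul_le_tsum_abs_mul hf hg))] at hsum
  have hi := congr_fun ((hasSum_zero_iff_of_nonneg fun i =>
    sub_nonneg.mpr (mul_le_abs_mul_of_abs_le hg i)).mp hgap) i
  rw [Pi.zero_apply, sub_eq_zero] at hi
  exact hi.symm

end HolderL1Linfty

section Minimizer

variable {E F : Type*} [NormedAddCommGroup E] [InnerProductSpace ℝ E] [CompleteSpace E]
  [NormedAddCommGroup F] [InnerProductSpace ℝ F] [CompleteSpace F]

theorem isMaxOn_inner_adjoint_of_isMinOn {C : Set E} (hC : Convex ℝ C) (K : E →L[ℝ] F) (y : F)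
    {x : E} (hx : x ∈ C) (hmin : IsMinOn (fun w => ‖K w - y‖) C x) :
    IsMaxOn (fun w => ⟪ContinuousLinearMap.adjoint K (y - K x), w⟫) C x := by
  have hKC : Convex ℝ (K '' C) := hC.linear_image K.toLinearMap
  have : Nonempty (K '' C) := ⟨⟨K x, x, hx, rfl⟩⟩
  have hproj : ‖y - K x‖ = ⨅ v : K '' C, ‖y - v‖ := by
    refine le_antisymm (le_ciInf ?_) (ciInf_le ⟨0, Set.forall_mem_range.mpr fun _ => norm_nonneg _⟩
      (⟨K x, x, hx, rfl⟩ : K '' C))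
    rintro ⟨_, w, hw, rfl⟩
    simpa only [norm_sub_rev y] using isMinOn_iff.mp hmin w hw
  have hvar := (norm_eq_iInf_iff_real_inner_le_zero hKC ⟨x, hx, rfl⟩).mp hproj
  refine isMaxOn_iff.mpr fun w hw => ?_
  rw [ContinuousLinearMap.adjoint_inner_left, ContinuousLinearMap.adjoint_inner_left,
    ← sub_nonpos, ← inner_sub_right]
  exact hvar (K w) ⟨w, hw, rfl⟩

end Minimizer

section LinearMaximizer

variable {I : Type*} {R : ℝ}

theorem inner_eq_tsum_mul (g x : lp (fun _ : I => ℝ) 2) : ⟪g, x⟫ = ∑' i, x i * g i := by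
  simp only [lp.inner_eq_tsum, Real.inner_apply, mul_comm]

theorem abs_apply_le_iSup_abs (g : lp (fun _ : I => ℝ) 2) (i : I) : |g i| ≤ ⨆ j, |g j| :=
  le_ciSup ⟨‖g‖, Set.forall_mem_range.mpr fun j => by
    simpa only [Real.norm_eq_abs] using lp.norm_apply_le_norm two_ne_zero g j⟩ i

theorem iSup_abs_pos {g : lp (fun _ : I => ℝ) 2} (hg : g ≠ 0) : 0 < ⨆ j, |g j| := by
  obtain ⟨i, hi⟩ : ∃ i, g i ≠ 0 := by
    by_contra! h
    exact hg (lp.ext (funext h))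
  exact (abs_pos.mpr hi).trans_le (abs_apply_le_iSup_abs g i)

theorem mul_iSup_abs_le_of_isMaxOn (hR : 0 ≤ R) {g x : lp (fun _ : I => ℝ) 2}
    (hmax : IsMaxOn (fun w => ⟪g, w⟫) (l1Ball I R) x) : R * ⨆ i, |g i| ≤ ⟪g, x⟫ := by
  classical
  have hvertex : ∀ i, R * |g i| ≤ ⟪g, x⟫ := fun i => by
    have hc : |R * Real.sign (g i)| ≤ R := by
      rw [abs_mul, abs_of_nonneg hR]
      exact mul_le_of_le_one_right hR (Real.abs_sign_le_one _)
    calc R * |g i| = ⟪g, lp.single 2 i (R * Real.sign (g i))⟫ := by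
          rw [lp.inner_single_right, Real.inner_apply, ← Real.mul_sign_self, mul_left_comm]
      _ ≤ ⟪g, x⟫ := isMaxOn_iff.mp hmax _ (single_mem_l1Ball i hc)
  rw [Real.mul_iSup_of_nonneg hR]
  exact Real.iSup_le hvertex (by simpa using isMaxOn_iff.mp hmax 0 zero_mem_l1Ball)

theorem tsum_abs_eq_and_mul_eq_of_isMaxOn (hR : 0 < R) {g x : lp (fun _ : I => ℝ) 2}
    (hg : g ≠ 0) (hx : x ∈ l1Ball I R) (hmax : IsMaxOn (fun w => ⟪g, w⟫) (l1Ball I R) x) :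
    ∑' i, |x i| = R ∧ ∀ i, x i * g i = |x i| * ⨆ j, |g j| := by
  have hN := tsum_abs_le_of_mem_l1Ball hR.le hx
  have hM := iSup_abs_pos hg
  have hlow := inner_eq_tsum_mul g x ▸ mul_iSup_abs_le_of_isMaxOn hR.le hmax
  have hup := tsum_mul_le_tsum_abs_mul (summable_abs_of_mem_l1Ball hx) (abs_apply_le_iSup_abs g)
  refine ⟨hN.antisymm (le_of_mul_le_mul_right (hlow.trans hup) hM), ?_⟩
  exact mul_eq_abs_mul_of_tsum_abs_mul_le (summable_abs_of_mem_l1Ball hx) (abs_apply_le_iSup_abs g)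
    ((mul_le_mul_of_nonneg_right hN hM.le).trans hlow)

end LinearMaximizer

theorem stmt13_general {I : Type*} {H : Type*} [NormedAddCommGroup H]
    [InnerProductSpace ℝ H] [CompleteSpace H]
    (K : lp (fun _ : I => ℝ) 2 →L[ℝ] H) (y : H) (R : ℝ) (hR : 0 < R)
    (u : H)
    (hu : ∀ xt ∈ l1Ball I R,
      (∀ w ∈ l1Ball I R, ‖K xt - y‖ ^ 2 ≤ ‖K w - y‖ ^ 2) → K xt = u)
    (hne : (ContinuousLinearMap.adjoint K) (y - u) ≠ 0)
    (e : I → ℝ)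
    (he : ∀ i : I, e i =
      if |(ContinuousLinearMap.adjoint K) (y - u) i| =
          (⨆ j : I, |(ContinuousLinearMap.adjoint K) (y - u) j|) then
        Real.sign ((ContinuousLinearMap.adjoint K) (y - u) i)
      else 0) :
    ∀ xt ∈ l1Ball I R,
      (∀ w ∈ l1Ball I R, ‖K xt - y‖ ^ 2 ≤ ‖K w - y‖ ^ 2) →
      ∑' i : I, xt i * e i = R := by
  intro xt hxt hmin
  have hmax : IsMaxOn (fun w => ⟪ContinuousLinearMap.adjoint K (y - u), w⟫) (l1Ball I R) xt := by
    rw [← hu xt hxt hmin]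
    refine isMaxOn_inner_adjoint_of_isMinOn convex_l1Ball K y hxt (isMinOn_iff.mpr fun w hw => ?_)
    exact (pow_le_pow_iff_left₀ (norm_nonneg _) (norm_nonneg _) two_ne_zero).mp (hmin w hw)
  obtain ⟨hnorm, hterm⟩ := tsum_abs_eq_and_mul_eq_of_isMaxOn hR hne hxt hmax
  rw [← hnorm]
  refine tsum_congr fun i => ?_
  rw [he i]
  exact Real.mul_ite_sign_eq_abs (iSup_abs_pos hne) (abs_apply_le_iSup_abs _ i) (hterm i)

/-- With `e i = sign((K*(y-u)) i)` for `i ∈ Γ = {i : |(K*(y-u)) i| = ‖K*(y-u)‖_∞}` and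
`e i = 0` otherwise, every minimizer `xt` of `‖Kx-y‖²` on `B_R` satisfies `⟨xt, e⟩ = R`,
provided the minimizers are not global minimizers (`K*(y-u) ≠ 0`). -/
theorem stmt13 {I : Type*} [Countable I] {H : Type*} [NormedAddCommGroup H]
    [InnerProductSpace ℝ H] [CompleteSpace H]
    (K : lp (fun _ : I => ℝ) 2 →L[ℝ] H) (y : H) (R : ℝ) (hR : 0 < R)
    (u : H)
    (hu : ∀ xt ∈ l1Ball I R,
      (∀ w ∈ l1Ball I R, ‖K xt - y‖ ^ 2 ≤ ‖K w - y‖ ^ 2) → K xt = u)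
    (hex : ∃ xt ∈ l1Ball I R, ∀ w ∈ l1Ball I R, ‖K xt - y‖ ^ 2 ≤ ‖K w - y‖ ^ 2)
    (hne : (ContinuousLinearMap.adjoint K) (y - u) ≠ 0)
    (e : I → ℝ)
    (he : ∀ i : I, e i =
      if |(ContinuousLinearMap.adjoint K) (y - u) i| =
          (⨆ j : I, |(ContinuousLinearMap.adjoint K) (y - u) j|) then
        Real.sign ((ContinuousLinearMap.adjoint K) (y - u) i)
      else 0) :
    ∀ xt ∈ l1Ball I R,
      (∀ w ∈ l1Ball I R, ‖K xt - y‖ ^ 2 ≤ ‖K w - y‖ ^ 2) →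
      ∑' i : I, xt i * e i = R :=
  stmt13_general K y R hR u hu hne e he
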